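/- arXiv:2204.06730 — 3 statements merged into one kernel-verified Lean document; each statement's English description precedes it below -/
import Mathlib

section
/- (Disjunction-free conservativity) Let A be a formula of the disjunction-free language L⁻_{⊥,⊃} (built from propositional variables and ⊥ using only ∧, →, ⊃). If ⊨⊥ A (A is true at the base state of every S⊥-model), then ⊨⊃ A (A is true at every world of every S⁻⊥-model). -/
/-!
Given an S⁻⊥-model `M` and a world `w`, add a fresh base state below all of `M`, at which a
variable holds iff it holds throughout `M`. The old worlds keep their truth values, and for a
disjunction-free formula truth at the new base state means truth at every world of `M`; so
validity at base states yields truth at `w`. Disjunction is excluded because `A ∨ B` may hold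
everywhere in `M` while neither disjunct does.
-/

/-- Formulas of the language L_{⊥,⊃}. -/
inductive Formula : Type
  | var : ℕ → Formula
  | bot : Formula
  | and : Formula → Formula → Formula
  | or  : Formula → Formula → Formula
  | imp : Formula → Formula → Formula
  | sup : Formula → Formula → Formula

/-- A is disjunction-free, i.e. a formula of L⁻_{⊥,⊃}. -/
def Formula.orFree : Formula → Prop
  | .var _ => True
  | .bot => True
  | .and A B => A.orFree ∧ B.orFree
  | .or _ _ => False
  | .imp A B => A.orFree ∧ B.orFree
  | .sup A B => A.orFree ∧ B.orFree

/-- An S⁻⊥-model ⟨W, ≤, V⟩ (no base state). -/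
structure KModel where
  W : Type
  le : W → W → Prop
  refl : ∀ w, le w w
  trans : ∀ u v w, le u v → le v w → le u w
  V : W → ℕ → Prop
  hered : ∀ w₁ w₂ p, V w₁ p → le w₁ w₂ → V w₂ p

/-- The interpretation I_⊃ : `M.sat A w` means I_⊃(w, A) = 1. -/
def KModel.sat (M : KModel) : Formula → M.W → Prop
  | .var p, w => M.V w p
  | .bot, _ => False
  | .and A B, w => M.sat A w ∧ M.sat B w
  | .or A B, w => M.sat A w ∨ M.sat B w
  | .sup A B, w => (∃ x, ¬ M.sat A x) ∨ M.sat B w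
  | .imp A B, w => ∀ x, M.le w x → M.sat A x → M.sat B x

/-- ⊨⊃ A : A is true at every world of every S⁻⊥-model. -/
def ValidSup (A : Formula) : Prop := ∀ (M : KModel) (w : M.W), M.sat A w

/-- ⊨⊥ A : A is true at the base state of every S⊥-model, i.e. of every
S⁻⊥-model having a least element g. -/
def ValidBot (A : Formula) : Prop :=
  ∀ (M : KModel) (g : M.W), (∀ w, M.le g w) → M.sat A g

namespace KModel

/-- The worlds of `M` as `some u`, below all of them the new base state `none`. -/
def withRoot (M : KModel) : KModel where
  W := Option M.W
  le
    | none, _ => True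
    | some _, none => False
    | some u, some v => M.le u v
  refl
    | none => trivial
    | some u => M.refl u
  trans
    | none, _, _, _, _ => trivial
    | some _, none, _, h, _ => h.elim
    | some _, some _, none, _, h => h.elim
    | some u, some v, some w, huv, hvw => M.trans u v w huv hvw
  V
    | none, p => ∀ u, M.V u p
    | some u, p => M.V u p
  hered
    | none, none, _, h, _ => h
    | none, some v, _, h, _ => h v
    | some _, none, _, _, h => h.elim
    | some u, some v, p, h, huv => M.hered u v p h huv

theorem withRoot_none_le (M : KModel) (x : M.withRoot.W) : M.withRoot.le none x := trivial

def RootAgrees (M : KModel) (A : Formula) : Prop :=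
  (∀ u, M.withRoot.sat A (some u) ↔ M.sat A u) ∧ (M.withRoot.sat A none ↔ ∀ u, M.sat A u)

variable {M : KModel} {A B : Formula}

theorem rootAgrees_var (M : KModel) (p : ℕ) : M.RootAgrees (.var p) :=
  ⟨fun _ => Iff.rfl, Iff.rfl⟩

theorem rootAgrees_bot (M : KModel) [Nonempty M.W] : M.RootAgrees .bot :=
  ⟨fun _ => Iff.rfl, ⟨False.elim, fun h => h (Classical.arbitrary M.W)⟩⟩

theorem RootAgrees.exists_not_sat_iff (hA : M.RootAgrees A) :
    (∃ x, ¬ M.withRoot.sat A x) ↔ ∃ u, ¬ M.sat A u := by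
  constructor
  · rintro ⟨x | u, hx⟩
    · by_contra! hall
      exact hx (hA.2.mpr hall)
    · exact ⟨u, fun h => hx ((hA.1 u).mpr h)⟩
  · rintro ⟨u, hu⟩
    exact ⟨some u, fun h => hu ((hA.1 u).mp h)⟩

theorem RootAgrees.and (hA : M.RootAgrees A) (hB : M.RootAgrees B) :
    M.RootAgrees (.and A B) := by
  refine ⟨fun u => and_congr (hA.1 u) (hB.1 u), ?_⟩
  show M.withRoot.sat A none ∧ M.withRoot.sat B none ↔ _
  rw [hA.2, hB.2]
  exact forall_and.symm

theorem RootAgrees.imp (hA : M.RootAgrees A) (hB : M.RootAgrees B) :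
    M.RootAgrees (.imp A B) := by
  refine ⟨fun u => ⟨fun h v huv hv => ?_, fun h x hux hx => ?_⟩,
    ⟨fun h u v _ hv => ?_, fun h x _ hx => ?_⟩⟩
  · exact (hB.1 v).mp (h (some v) huv ((hA.1 v).mpr hv))
  · cases x with
    | none => exact hux.elim
    | some v => exact (hB.1 v).mpr (h v hux ((hA.1 v).mp hx))
  · exact (hB.1 v).mp (h (some v) trivial ((hA.1 v).mpr hv))
  · -- by reflexivity in `M`, `h` makes `A → B` hold pointwise on `M`
    cases x with
    | none => exact hB.2.mpr fun u => h u u (M.refl u) (hA.2.mp hx u)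
    | some v => exact (hB.1 v).mpr (h v v (M.refl v) ((hA.1 v).mp hx))

theorem RootAgrees.sup (hA : M.RootAgrees A) (hB : M.RootAgrees B) :
    M.RootAgrees (.sup A B) := by
  refine ⟨fun u => or_congr hA.exists_not_sat_iff (hB.1 u), ?_⟩
  show (∃ x, ¬ M.withRoot.sat A x) ∨ M.withRoot.sat B none ↔ _
  rw [hA.exists_not_sat_iff, hB.2]
  exact forall_or_left.symm

theorem rootAgrees_of_orFree (M : KModel) [Nonempty M.W] :
    ∀ {A : Formula}, A.orFree → M.RootAgrees A
  | .var p, _ => M.rootAgrees_var p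
  | .bot, _ => M.rootAgrees_bot
  | .and _ _, ⟨hA, hB⟩ => (rootAgrees_of_orFree M hA).and (rootAgrees_of_orFree M hB)
  | .imp _ _, ⟨hA, hB⟩ => (rootAgrees_of_orFree M hA).imp (rootAgrees_of_orFree M hB)
  | .sup _ _, ⟨hA, hB⟩ => (rootAgrees_of_orFree M hA).sup (rootAgrees_of_orFree M hB)

end KModel

/-- Disjunction-free conservativity: for disjunction-free A,
⊨⊥ A implies ⊨⊃ A. -/
theorem orfree_conservativity (A : Formula) (hA : A.orFree)
    (h : ValidBot A) : ValidSup A := by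
  intro M w
  have : Nonempty M.W := ⟨w⟩
  exact (M.rootAgrees_of_orFree hA).2.mp (h M.withRoot none M.withRoot_none_le) w
end

section
/- (Soundness and completeness of S⊥w) For every set of formulas Γ and every formula A of L_{⊥,⊃}: Γ ⊢_{⊥w} A in the system S⊥w if and only if Γ ⊨_{⊥w} A with respect to S⊥w-models. -/
/-- An S⊥w-model ⟨g, W, ≤, V⟩, where V is defined on Prop ∪ {⊥}
(the ⊥-part is `Vbot`), is hereditary, and satisfies V(g,⊥)=0. -/
structure WModel where
  W : Type
  le : W → W → Prop
  refl : ∀ w, le w w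
  trans : ∀ u v w, le u v → le v w → le u w
  g : W
  least : ∀ w, le g w
  V : W → ℕ → Prop
  Vbot : W → Prop
  hered : ∀ w₁ w₂ p, V w₁ p → le w₁ w₂ → V w₂ p
  heredBot : ∀ w₁ w₂, Vbot w₁ → le w₁ w₂ → Vbot w₂
  botG : ¬ Vbot g

/-- The interpretation I : `M.sat A w` means I(w, A) = 1. -/
def WModel.sat (M : WModel) : Formula → M.W → Prop
  | .var p, w => M.V w p
  | .bot, w => M.Vbot w
  | .and A B, w => M.sat A w ∧ M.sat B w
  | .or A B, w => M.sat A w ∨ M.sat B w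
  | .sup A B, w => ¬ M.sat A M.g ∨ M.sat B w
  | .imp A B, w => ∀ x, M.le w x → M.sat A x → M.sat B x

/-- Semantic consequence Γ ⊨_{⊥w} A. -/
def WConseq (Γ : Set Formula) (A : Formula) : Prop :=
  ∀ M : WModel, (∀ B ∈ Γ, M.sat B M.g) → M.sat A M.g

/-- The Hilbert system S⊥w : `WDeriv Γ A` means Γ ⊢_{⊥w} A. -/
inductive WDeriv : Set Formula → Formula → Prop
  | hyp {Γ A} : A ∈ Γ → WDeriv Γ A
  | ax1 {Γ} (A B : Formula) : WDeriv Γ (A.imp (B.imp A))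
  | ax2 {Γ} (A B C : Formula) :
      WDeriv Γ ((A.imp (B.imp C)).imp ((A.imp B).imp (A.imp C)))
  | ax3 {Γ} (A B : Formula) : WDeriv Γ ((A.and B).imp A)
  | ax4 {Γ} (A B : Formula) : WDeriv Γ ((A.and B).imp B)
  | ax5 {Γ} (A B C : Formula) :
      WDeriv Γ ((C.imp A).imp ((C.imp B).imp (C.imp (A.and B))))
  | ax6 {Γ} (A B : Formula) : WDeriv Γ (A.imp (A.or B))
  | ax7 {Γ} (A B : Formula) : WDeriv Γ (B.imp (A.or B))
  | ax8 {Γ} (A B C : Formula) :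
      WDeriv Γ ((A.imp C).imp ((B.imp C).imp ((A.or B).imp C)))
  | axM1 {Γ} (A B : Formula) : WDeriv Γ ((A.imp B).sup (A.sup B))
  | axM2 {Γ} (A B C : Formula) :
      WDeriv Γ ((A.sup (B.sup C)).imp ((A.sup B).sup (A.sup C)))
  | axM3 {Γ} (A B C : Formula) :
      WDeriv Γ ((A.sup (B.imp C)).imp (B.imp (A.sup C)))
  | axM4 {Γ} (A B C : Formula) :
      WDeriv Γ ((A.imp (B.sup C)).imp (B.sup (A.imp C)))
  | axM5 {Γ} (A B C : Formula) :
      WDeriv Γ (((A.sup B).sup C).imp ((A.sup C).imp C))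
  | axM6 {Γ} (A B C : Formula) :
      WDeriv Γ ((A.sup C).imp ((B.sup C).imp ((A.or B).sup C)))
  | axE {Γ} (A : Formula) : WDeriv Γ (Formula.bot.sup A)
  | mp {Γ A B} : WDeriv Γ A → WDeriv Γ (A.sup B) → WDeriv Γ B

section Lindenbaum

variable {α : Type*}

def ChainCompact (D : Set α → α → Prop) : Prop :=
  ∀ c : Set (Set α), IsChain (· ⊆ ·) c → c.Nonempty → ∀ {X}, D (⋃₀ c) X → ∃ s ∈ c, D s X

theorem ChainCompact.exists_maximal {D : Set α → α → Prop} (hD : ChainCompact D)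
    {S : Set α} {C : α} (h : ¬ D S C) :
    ∃ T, S ⊆ T ∧ ¬ D T C ∧ ∀ X ∉ T, D (insert X T) C := by
  have chain_bounded : ∀ c ⊆ {T | ¬ D T C}, IsChain (· ⊆ ·) c → c.Nonempty →
      ∃ ub ∈ {T | ¬ D T C}, ∀ s ∈ c, s ⊆ ub := by
    intro c hcD hc hne
    refine ⟨⋃₀ c, fun hC => ?_, fun _ => Set.subset_sUnion_of_mem⟩
    obtain ⟨s, hs, hsC⟩ := hD c hc hne hC
    exact hcD hs hsC
  obtain ⟨T, hST, hT⟩ := zorn_subset_nonempty _ chain_bounded S h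
  exact ⟨T, hST, hT.prop, fun X hX => by_contra fun hXC => hX (hT.mem_of_prop_insert hXC)⟩

end Lindenbaum

namespace WDeriv

variable {Γ Γ' : Set Formula} {A B C : Formula}

theorem closure_induction {P : Formula → Prop} (h : WDeriv Γ A) (mem : ∀ X ∈ Γ, P X)
    (thm : ∀ X, (∀ Δ, WDeriv Δ X) → P X) (step : ∀ X Y, P X → P (X.sup Y) → P Y) : P A := by
  induction h with
  | hyp hX => exact mem _ hX
  | mp _ _ ihX ihXY => exact step _ _ ihX ihXY
  | ax1 A B => exact thm _ fun _ => ax1 A B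
  | ax2 A B C => exact thm _ fun _ => ax2 A B C
  | ax3 A B => exact thm _ fun _ => ax3 A B
  | ax4 A B => exact thm _ fun _ => ax4 A B
  | ax5 A B C => exact thm _ fun _ => ax5 A B C
  | ax6 A B => exact thm _ fun _ => ax6 A B
  | ax7 A B => exact thm _ fun _ => ax7 A B
  | ax8 A B C => exact thm _ fun _ => ax8 A B C
  | axM1 A B => exact thm _ fun _ => axM1 A B
  | axM2 A B C => exact thm _ fun _ => axM2 A B C
  | axM3 A B C => exact thm _ fun _ => axM3 A B C
  | axM4 A B C => exact thm _ fun _ => axM4 A B C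
  | axM5 A B C => exact thm _ fun _ => axM5 A B C
  | axM6 A B C => exact thm _ fun _ => axM6 A B C
  | axE A => exact thm _ fun _ => axE A

theorem mono (h : WDeriv Γ A) (hΓ : Γ ⊆ Γ') : WDeriv Γ' A :=
  h.closure_induction (fun _ hX => hyp (hΓ hX)) (fun _ hX => hX Γ') fun _ _ => mp

theorem chainCompact : ChainCompact WDeriv := by
  intro c hc hne X hX
  refine hX.closure_induction (P := fun X => ∃ s ∈ c, WDeriv s X) ?_ ?_ ?_
  · rintro Y ⟨s, hs, hY⟩
    exact ⟨s, hs, hyp hY⟩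
  · intro Y hY
    obtain ⟨s, hs⟩ := hne
    exact ⟨s, hs, hY s⟩
  · rintro Y Z ⟨s, hs, hY⟩ ⟨t, ht, hYZ⟩
    rcases hc.total hs ht with hst | hts
    · exact ⟨t, ht, (hY.mono hst).mp hYZ⟩
    · exact ⟨s, hs, hY.mp (hYZ.mono hts)⟩

theorem imp_mp (h : WDeriv Γ A) (hAB : WDeriv Γ (A.imp B)) : WDeriv Γ B :=
  h.mp (hAB.mp (axM1 A B))

theorem imp_self : WDeriv Γ (A.imp A) :=
  (ax1 A A).imp_mp ((ax1 A (A.imp A)).imp_mp (ax2 A (A.imp A) A))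

theorem sup_self : WDeriv Γ (A.sup A) :=
  imp_self.mp (axM1 A A)

theorem sup_intro (h : WDeriv Γ B) : WDeriv Γ (A.sup B) :=
  have hBAB : WDeriv Γ (B.sup (A.imp B)) :=
    (sup_self.imp_mp (ax1 (B.sup B) A)).imp_mp (axM4 A B B)
  (h.mp hBAB).mp (axM1 A B)

theorem imp_sup_intro : WDeriv Γ (C.imp (B.sup C)) :=
  (sup_intro imp_self).imp_mp (axM3 B C C)

theorem sup_imp_elim (h : WDeriv Γ B) : WDeriv Γ ((B.sup C).imp C) :=
  h.mp (imp_self.imp_mp (axM4 (B.sup C) B C))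

theorem deduction (h : WDeriv (insert B Γ) C) : WDeriv Γ (B.sup C) := by
  refine h.closure_induction (P := fun X => WDeriv Γ (B.sup X)) ?_ (fun X hX => sup_intro (hX Γ))
    fun X Y hX hXY => hX.mp (hXY.imp_mp (axM2 B X Y))
  rintro X (rfl | hX)
  · exact sup_self
  · exact sup_intro (hyp hX)

end WDeriv

/-- The consequence relation of the non-root worlds, at which modus ponens for `⊃` is unsound. -/
inductive ImpDeriv (S : Set Formula) : Formula → Prop
  | hyp {X : Formula} : X ∈ S → ImpDeriv S X
  | thm {X : Formula} : WDeriv ∅ X → ImpDeriv S X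
  | mp {X Y : Formula} : ImpDeriv S X → ImpDeriv S (X.imp Y) → ImpDeriv S Y

namespace ImpDeriv

variable {S T : Set Formula} {B X : Formula}

theorem mono (h : ImpDeriv S X) (hST : S ⊆ T) : ImpDeriv T X := by
  induction h with
  | hyp hX => exact hyp (hST hX)
  | thm hX => exact thm hX
  | mp _ _ ihX ihXY => exact ihX.mp ihXY

theorem chainCompact : ChainCompact ImpDeriv := by
  intro c hc hne X hX
  induction hX with
  | hyp hY =>
    obtain ⟨s, hs, hY⟩ := hY
    exact ⟨s, hs, hyp hY⟩
  | thm hY =>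
    obtain ⟨s, hs⟩ := hne
    exact ⟨s, hs, thm hY⟩
  | mp _ _ ihY ihYZ =>
    obtain ⟨s, hs, hY⟩ := ihY
    obtain ⟨t, ht, hYZ⟩ := ihYZ
    rcases hc.total hs ht with hst | hts
    · exact ⟨t, ht, (hY.mono hst).mp hYZ⟩
    · exact ⟨s, hs, hY.mp (hYZ.mono hts)⟩

theorem sound (h : ImpDeriv S X) : WDeriv S X := by
  induction h with
  | hyp hX => exact .hyp hX
  | thm hX => exact hX.mono (Set.empty_subset S)
  | mp _ _ ihX ihXY => exact ihX.imp_mp ihXY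

theorem deduction (h : ImpDeriv (insert B S) X) : ImpDeriv S (B.imp X) := by
  induction h with
  | hyp hX =>
    rcases hX with rfl | hX
    · exact thm WDeriv.imp_self
    · exact (hyp hX).mp (thm (.ax1 _ B))
  | thm hX => exact (thm hX).mp (thm (.ax1 _ B))
  | mp _ _ ihX ihXY => exact ihX.mp (ihXY.mp (thm (.ax2 _ _ _)))

end ImpDeriv

namespace WModel

variable (M : WModel)

theorem sat_mono {w x : M.W} (hwx : M.le w x) : ∀ {X : Formula}, M.sat X w → M.sat X x
  | .var _, h => M.hered _ _ _ h hwx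
  | .bot, h => M.heredBot _ _ h hwx
  | .and _ _, h => ⟨sat_mono hwx h.1, sat_mono hwx h.2⟩
  | .or _ _, h => h.imp (sat_mono hwx) (sat_mono hwx)
  | .sup _ _, h => h.imp id (sat_mono hwx)
  | .imp _ _, h => fun y hxy => h y (M.trans _ _ _ hwx hxy)

end WModel

theorem WDeriv.sound {Γ : Set Formula} {A : Formula} (h : WDeriv Γ A) : WConseq Γ A := by
  intro M hΓ
  induction h with
  | hyp hA => exact hΓ _ hA
  | mp _ _ ihA ihAB => exact ihAB.resolve_left (not_not_intro ihA)
  | ax1 A B => exact fun x _ hA y hxy _ => M.sat_mono hxy hA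
  | ax2 A B C =>
    exact fun x _ h₁ y hxy h₂ z hyz hA => h₁ z (M.trans _ _ _ hxy hyz) hA z (M.refl z) (h₂ z hyz hA)
  | ax3 A B => exact fun _ _ h => h.1
  | ax4 A B => exact fun _ _ h => h.2
  | ax5 A B C =>
    exact fun x _ h₁ y hxy h₂ z hyz hC => ⟨h₁ z (M.trans _ _ _ hxy hyz) hC, h₂ z hyz hC⟩
  | ax6 A B => exact fun _ _ => Or.inl
  | ax7 A B => exact fun _ _ => Or.inr
  | ax8 A B C =>
    exact fun x _ h₁ y hxy h₂ z hyz hAB => hAB.elim (h₁ z (M.trans _ _ _ hxy hyz)) (h₂ z hyz)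
  | axM1 A B => exact or_iff_not_imp_left.2 fun h => not_or_of_imp (not_not.1 h M.g (M.refl _))
  | axM2 A B C => exact fun _ _ h => by simp only [WModel.sat] at h ⊢; tauto
  | axM3 A B C => exact fun _ _ h y hxy hB => h.imp_right fun hBC => hBC y hxy hB
  | axM4 A B C =>
    exact fun _ _ h => or_iff_not_imp_left.2 fun hB y hxy hA => (h y hxy hA).resolve_left hB
  | axM5 A B C =>
    exact fun _ _ h y hxy hAC => h.elim (fun hAB => hAC.resolve_left (not_or.1 hAB).1)
      (M.sat_mono hxy)
  | axM6 A B C =>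
    intro x _ hAC y hxy hBC
    have hAC' := hAC.imp_right (M.sat_mono hxy)
    simp only [WModel.sat] at hBC hAC' ⊢
    tauto
  | axE A => exact Or.inl M.botG

structure IsRoot (Δ₀ : Set Formula) : Prop where
  closed : ∀ {X}, WDeriv Δ₀ X → X ∈ Δ₀
  prime : ∀ {X Y}, X.or Y ∈ Δ₀ → X ∈ Δ₀ ∨ Y ∈ Δ₀
  sup_mem : ∀ {X} Y, X ∉ Δ₀ → X.sup Y ∈ Δ₀
  bot_not_mem : Formula.bot ∉ Δ₀

theorem exists_root {Γ : Set Formula} {A : Formula} (h : ¬ WDeriv Γ A) :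
    ∃ Δ₀, IsRoot Δ₀ ∧ Γ ⊆ Δ₀ ∧ A ∉ Δ₀ := by
  obtain ⟨T, hΓT, hA, hmax⟩ := WDeriv.chainCompact.exists_maximal h
  have sup_A : ∀ X ∉ T, WDeriv T (X.sup A) := fun X hX => (hmax X hX).deduction
  refine ⟨T, ⟨fun hX => by_contra fun hX' => hA (hX.mp (sup_A _ hX')), ?_, ?_, ?_⟩, hΓT,
    fun hAT => hA (.hyp hAT)⟩
  · intro X Y hXY
    by_contra! hXY'
    exact hA ((WDeriv.hyp hXY).mp
      ((sup_A _ hXY'.2).imp_mp ((sup_A _ hXY'.1).imp_mp (.axM6 X Y A))))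
  · intro X Y hX
    by_contra hXY
    exact hA ((sup_A _ hX).imp_mp ((sup_A _ hXY).imp_mp (.axM5 X Y A)))
  · exact fun hbot => hA ((WDeriv.hyp hbot).mp (.axE A))

structure IsWorld (Δ₀ Δ : Set Formula) : Prop where
  root_subset : Δ₀ ⊆ Δ
  closed : ∀ {X}, ImpDeriv Δ X → X ∈ Δ
  prime : ∀ {X Y}, X.or Y ∈ Δ → X ∈ Δ ∨ Y ∈ Δ

theorem IsRoot.isWorld {Δ₀ : Set Formula} (R : IsRoot Δ₀) : IsWorld Δ₀ Δ₀ :=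
  ⟨subset_rfl, fun h => R.closed h.sound, R.prime⟩

namespace IsWorld

variable {Δ₀ Δ : Set Formula} {X Y : Formula}

theorem mem_of_imp_mem (hΔ : IsWorld Δ₀ Δ) (hX : X ∈ Δ) (hXY : X.imp Y ∈ Δ) : Y ∈ Δ :=
  hΔ.closed ((ImpDeriv.hyp hX).mp (.hyp hXY))

theorem mem_of_thm (hΔ : IsWorld Δ₀ Δ) (hX : WDeriv ∅ X) : X ∈ Δ :=
  hΔ.closed (.thm hX)

theorem and_mem_iff (hΔ : IsWorld Δ₀ Δ) : X.and Y ∈ Δ ↔ X ∈ Δ ∧ Y ∈ Δ := by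
  refine ⟨fun h => ⟨hΔ.mem_of_imp_mem h (hΔ.mem_of_thm (.ax3 X Y)),
    hΔ.mem_of_imp_mem h (hΔ.mem_of_thm (.ax4 X Y))⟩, fun ⟨hX, hY⟩ => ?_⟩
  have hYX : Y.imp X ∈ Δ := hΔ.mem_of_imp_mem hX (hΔ.mem_of_thm (.ax1 X Y))
  have hYXY : Y.imp (X.and Y) ∈ Δ := hΔ.mem_of_imp_mem (hΔ.mem_of_thm WDeriv.imp_self)
    (hΔ.mem_of_imp_mem hYX (hΔ.mem_of_thm (.ax5 X Y Y)))
  exact hΔ.mem_of_imp_mem hY hYXY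

theorem or_mem_iff (hΔ : IsWorld Δ₀ Δ) : X.or Y ∈ Δ ↔ X ∈ Δ ∨ Y ∈ Δ :=
  ⟨hΔ.prime, fun h => h.elim (fun hX => hΔ.mem_of_imp_mem hX (hΔ.mem_of_thm (.ax6 X Y)))
    fun hY => hΔ.mem_of_imp_mem hY (hΔ.mem_of_thm (.ax7 X Y))⟩

theorem sup_mem_iff (R : IsRoot Δ₀) (hΔ : IsWorld Δ₀ Δ) : X.sup Y ∈ Δ ↔ X ∉ Δ₀ ∨ Y ∈ Δ := by
  refine ⟨fun h => or_iff_not_imp_left.2 fun hX => ?_, fun h => h.elim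
    (fun hX => hΔ.root_subset (R.sup_mem Y hX))
    fun hY => hΔ.mem_of_imp_mem hY (hΔ.mem_of_thm WDeriv.imp_sup_intro)⟩
  exact hΔ.mem_of_imp_mem h
    (hΔ.root_subset (R.closed (WDeriv.sup_imp_elim (.hyp (not_not.1 hX)))))

theorem exists_extension (hΔ : IsWorld Δ₀ Δ) (hXY : X.imp Y ∉ Δ) :
    ∃ Δ', IsWorld Δ₀ Δ' ∧ Δ ⊆ Δ' ∧ X ∈ Δ' ∧ Y ∉ Δ' := by
  have h : ¬ ImpDeriv (insert X Δ) Y := fun h => hXY (hΔ.closed h.deduction)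
  obtain ⟨T, hXΔT, hY, hmax⟩ := ImpDeriv.chainCompact.exists_maximal h
  have imp_Y : ∀ Z ∉ T, ImpDeriv T (Z.imp Y) := fun Z hZ => (hmax Z hZ).deduction
  have hΔT : Δ ⊆ T := (Set.subset_insert X Δ).trans hXΔT
  refine ⟨T, ⟨hΔ.root_subset.trans hΔT, fun hZ => by_contra fun hZ' => hY (hZ.mp (imp_Y _ hZ')),
    fun {Z W} hZW => ?_⟩, hΔT, hXΔT (Set.mem_insert X Δ), fun hYT => hY (.hyp hYT)⟩
  by_contra! hZW'
  exact hY ((ImpDeriv.hyp hZW).mp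
    ((imp_Y _ hZW'.2).mp ((imp_Y _ hZW'.1).mp (.thm (.ax8 Z W Y)))))

end IsWorld

def canonicalModel (Δ₀ : Set Formula) (R : IsRoot Δ₀) : WModel where
  W := {Δ // IsWorld Δ₀ Δ}
  le Δ Δ' := Δ.1 ⊆ Δ'.1
  refl _ := subset_rfl
  trans _ _ _ := Set.Subset.trans
  g := ⟨Δ₀, R.isWorld⟩
  least Δ := Δ.2.root_subset
  V Δ p := Formula.var p ∈ Δ.1
  Vbot Δ := Formula.bot ∈ Δ.1
  hered _ _ _ hp hle := hle hp
  heredBot _ _ hbot hle := hle hbot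
  botG := R.bot_not_mem

theorem canonicalModel_sat {Δ₀ : Set Formula} (R : IsRoot Δ₀) :
    ∀ (X : Formula) (Δ : (canonicalModel Δ₀ R).W), (canonicalModel Δ₀ R).sat X Δ ↔ X ∈ Δ.1
  | .var _, _ | .bot, _ => Iff.rfl
  | .and X Y, Δ => (and_congr (canonicalModel_sat R X Δ) (canonicalModel_sat R Y Δ)).trans
      Δ.2.and_mem_iff.symm
  | .or X Y, Δ => (or_congr (canonicalModel_sat R X Δ) (canonicalModel_sat R Y Δ)).trans
      Δ.2.or_mem_iff.symm
  | .sup X Y, Δ => (or_congr (not_congr (canonicalModel_sat R X _))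
      (canonicalModel_sat R Y Δ)).trans (Δ.2.sup_mem_iff R).symm
  | .imp X Y, Δ => by
    refine ⟨fun h => by_contra fun hXY => ?_, fun h Δ' hΔΔ' hX => ?_⟩
    · obtain ⟨Δ', hΔ', hΔΔ', hX, hY⟩ := Δ.2.exists_extension hXY
      exact hY ((canonicalModel_sat R Y ⟨Δ', hΔ'⟩).1
        (h ⟨Δ', hΔ'⟩ hΔΔ' ((canonicalModel_sat R X ⟨Δ', hΔ'⟩).2 hX)))
    · exact (canonicalModel_sat R Y Δ').2
        (Δ'.2.mem_of_imp_mem ((canonicalModel_sat R X Δ').1 hX) (hΔΔ' h))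

/-- Soundness and completeness of S⊥w : Γ ⊢_{⊥w} A iff Γ ⊨_{⊥w} A. -/
theorem soundness_completeness_W (Γ : Set Formula) (A : Formula) :
    WDeriv Γ A ↔ WConseq Γ A := by
  refine ⟨WDeriv.sound, fun hA => by_contra fun hΓA => ?_⟩
  obtain ⟨Δ₀, R, hΓ, hA₀⟩ := exists_root hΓA
  let M := canonicalModel Δ₀ R
  have hΓM : ∀ B ∈ Γ, M.sat B M.g := fun B hB => (canonicalModel_sat R B M.g).2 (hΓ hB)
  exact hA₀ ((canonicalModel_sat R A M.g).1 (hA M hΓM))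
end

section
/- (Non-definability of intuitionistic absurdity in S⊥w) There is no formula F of L_{⊥,⊃} such that I(w, F) = 0 for every world w of every S⊥w-model ⟨g, W, ≤, V⟩. -/
/-! A world at which ⊥ and every variable hold forces every formula: heredity carries this to all
later worlds, which settles `→`, and `⊃` is satisfied through its consequent. Such a world exists
above the root of the two-world chain `false ≤ true`, where nothing holds at the root. -/

theorem WModel.sat_of_explosive (M : WModel) (F : Formula) {w : M.W}
    (hbot : M.Vbot w) (hvar : ∀ p, M.V w p) : M.sat F w := by
  induction F generalizing w with
  | var p => exact hvar p
  | bot => exact hbot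
  | and A B ihA ihB => exact ⟨ihA hbot hvar, ihB hbot hvar⟩
  | or A _ ihA _ => exact Or.inl (ihA hbot hvar)
  | imp _ B _ ihB =>
    intro x hwx _
    exact ihB (M.heredBot w x hbot hwx) fun p => M.hered w x p (hvar p) hwx
  | sup _ B _ ihB => exact Or.inr (ihB hbot hvar)

def twoWorldModel : WModel where
  W := Bool
  le a b := a ≤ b
  refl := le_refl
  trans _ _ _ := le_trans
  g := false
  least := Bool.false_le
  V w _ := w = true
  Vbot w := w = true
  hered _ _ _ h hle := by subst h; exact top_unique hle
  heredBot _ _ h hle := by subst h; exact top_unique hle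
  botG := Bool.false_ne_true

theorem twoWorldModel_sat_true (F : Formula) : twoWorldModel.sat F true :=
  twoWorldModel.sat_of_explosive F rfl fun _ => rfl

/-- Non-definability of intuitionistic absurdity in S⊥w : there is no
formula F of L_{⊥,⊃} with I(w,F)=0 at every world of every S⊥w-model. -/
theorem no_intuitionistic_absurdity :
    ¬ ∃ F : Formula, ∀ (M : WModel) (w : M.W), ¬ M.sat F w := by
  rintro ⟨F, hF⟩
  exact hF twoWorldModel true (twoWorldModel_sat_true F)
end
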